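/- In the Euclidean plane, consider an isosceles triangle with apex x̄, legs d(x̄,ȳ) = d(x̄,z̄) = 1, apex angle θ ∈ (0,π), and let w̄ be the midpoint of [ȳ,z̄]. For every ε > 0 there exists δ > 0 such that: if x̃, ỹ, z̃, w̃ are points in the Euclidean plane with d(x̃,ỹ) = 1, d(x̃,z̃) = 1, d(ỹ,w̃) = d(ȳ,w̄), d(w̃,z̃) = d(w̄,z̄), with z̃ and ỹ on opposite sides of the line through x̃ and w̃, with ∠w̃(x̃,ỹ) + ∠w̃(x̃,z̃) ≥ π, and with θ − δ ≤ ∠x̃(ỹ,z̃) ≤ θ, then d(x̄,w̄) − ε ≤ d(x̃,w̃). -/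

import Mathlib

open Real EuclideanGeometry

/-! By Apollonius' theorem the distance from a point to the midpoint `m` of `[y, z]` is the
median length, a function of its distances to `y` and `z` and of `d(y, z)`. The triangle
inequality `d(x̃, w̃) ≥ d(x̃, m̃) - d(w̃, m̃)` therefore bounds `d(x̃, w̃)` below by a continuous
function of `d(ỹ, z̃)`, hence of the apex angle `∠x̃(ỹ, z̃)`. At the angle `θ` this function
equals `d(x̄, w̄) - d(w̄, w̄) = d(x̄, w̄)`, because `w̄` is itself the midpoint of `[ȳ, z̄]`. -/

noncomputable def medianLength (p q r : ℝ) : ℝ := √((p ^ 2 + q ^ 2) / 2 - (r / 2) ^ 2)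

section

variable {V P : Type*} [NormedAddCommGroup V] [InnerProductSpace ℝ V] [MetricSpace P]
  [NormedAddTorsor V P]

theorem dist_midpoint_eq_medianLength (a b c : P) :
    dist a (midpoint ℝ b c) = medianLength (dist a b) (dist a c) (dist b c) := by
  rw [medianLength, dist_sq_add_dist_sq_eq_two_mul_dist_midpoint_sq_add_half_dist_sq a b c,
    mul_div_cancel_left₀ _ two_ne_zero, add_sub_cancel_right, sqrt_sq dist_nonneg]

theorem medianLength_sub_medianLength_le_dist (x w y z : V) :
    medianLength (dist x y) (dist x z) (dist y z) - medianLength (dist w y) (dist w z) (dist y z)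
      ≤ dist x w := by
  rw [← dist_midpoint_eq_medianLength, ← dist_midpoint_eq_medianLength]
  linarith [dist_triangle x w (midpoint ℝ y z)]

theorem dist_eq_sqrt_two_sub_two_mul_cos_angle {x y z : P} (hxy : dist x y = 1)
    (hxz : dist x z = 1) : dist y z = √(2 - 2 * cos (∠ y x z)) := by
  have h := law_cos y x z
  rw [dist_comm y x, dist_comm z x, hxy, hxz] at h
  rw [← sqrt_sq dist_nonneg, sq, h]
  ring_nf

end

theorem controlled_alexandrov_lemma (θ : ℝ)
    (xb yb zb wb : EuclideanSpace ℝ (Fin 2))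
    (hxy : dist xb yb = 1) (hxz : dist xb zb = 1)
    (hangle : EuclideanGeometry.angle yb xb zb = θ)
    (hw : wb = midpoint ℝ yb zb) :
    ∀ ε : ℝ, 0 < ε → ∃ δ : ℝ, 0 < δ ∧
      ∀ xt yt zt wt : EuclideanSpace ℝ (Fin 2),
        dist xt yt = 1 → dist xt zt = 1 →
        dist yt wt = dist yb wb → dist wt zt = dist wb zb →
        (affineSpan ℝ ({xt, wt} : Set (EuclideanSpace ℝ (Fin 2)))).SOppSide yt zt →
        π ≤ EuclideanGeometry.angle xt wt yt + EuclideanGeometry.angle xt wt zt →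
        θ - δ ≤ EuclideanGeometry.angle yt xt zt →
        EuclideanGeometry.angle yt xt zt ≤ θ →
        dist xb wb - ε ≤ dist xt wt := by
  intro ε hε
  set Φ : ℝ → ℝ := fun γ => medianLength 1 1 √(2 - 2 * cos γ) -
    medianLength (dist yb wb) (dist wb zb) √(2 - 2 * cos γ)
  have hΦ : Continuous Φ := by unfold Φ medianLength; fun_prop
  have hΦθ : dist xb wb = Φ θ := by
    calc dist xb wb = dist xb (midpoint ℝ yb zb) - dist wb (midpoint ℝ yb zb) := by
          rw [← hw, dist_self, sub_zero]
      _ = Φ θ := by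
          rw [dist_midpoint_eq_medianLength, dist_midpoint_eq_medianLength, hxy, hxz,
            dist_comm wb yb, dist_eq_sqrt_two_sub_two_mul_cos_angle hxy hxz, hangle]
  obtain ⟨δ, hδ, hΦ_near⟩ := Metric.eventually_nhds_iff.1 <|
    (hΦ.continuousAt (x := θ)).eventually_const_lt (by linarith : dist xb wb - ε < Φ θ)
  refine ⟨δ / 2, half_pos hδ, fun xt yt zt wt hxy' hxz' hyw' hwz' _ _ hlo hhi => ?_⟩
  have hγ : dist (∠ yt xt zt) θ < δ := by
    rw [Real.dist_eq, abs_sub_lt_iff]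
    constructor <;> linarith
  calc dist xb wb - ε ≤ Φ (∠ yt xt zt) := (hΦ_near hγ).le
    _ = medianLength (dist xt yt) (dist xt zt) (dist yt zt) -
          medianLength (dist wt yt) (dist wt zt) (dist yt zt) := by
        rw [hxy', hxz', dist_comm wt yt, hyw', hwz',
          dist_eq_sqrt_two_sub_two_mul_cos_angle hxy' hxz']
    _ ≤ dist xt wt := medianLength_sub_medianLength_le_dist xt wt yt zt
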